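/- Searles' operators on the span of standard Young tableaux of a fixed shape μ ⊢ n — where π_i · S = S if i is strictly left of i+1 in S, π_i · S = 0 if i and i+1 are in the same column of S, and π_i · S = s_i·S if i is strictly right of i+1 — satisfy the 0-Hecke relations π_i² = π_i, π_i π_{i+1} π_i = π_{i+1} π_i π_{i+1}, and π_i π_j = π_j π_i for |i−j| ≥ 2, making X_μ an H_n(0)-module. -/

import Mathlib

def IsCell (μ : List ℕ) (c : ℕ × ℕ) : Prop := c.2 < μ.getD c.1 0

/-- `f` is a standard Young tableau of shape `μ ⊢ n` (cells outside the diagram carry `0`). -/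
def IsSYTgen (n : ℕ) (μ : List ℕ) (f : ℕ × ℕ → ℕ) : Prop :=
  (∀ c, ¬ IsCell μ c → f c = 0) ∧
  (∀ c, IsCell μ c → 1 ≤ f c ∧ f c ≤ n) ∧
  (∀ k, 1 ≤ k → k ≤ n → ∃! c, IsCell μ c ∧ f c = k) ∧
  (∀ i j, IsCell μ (i, j + 1) → f (i, j) < f (i, j + 1)) ∧
  (∀ i j, IsCell μ (i + 1, j) → f (i, j) < f (i + 1, j))

open Classical in
/-- Searles' 0-Hecke operator `π_i` on a standard Young tableau: `some S` means the
result is the tableau `S`, `none` means the result is `0`. -/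
noncomputable def searlesStepG (μ : List ℕ) (i : ℕ) (f : ℕ × ℕ → ℕ) : Option (ℕ × ℕ → ℕ) :=
  if ∃ c c', IsCell μ c ∧ IsCell μ c' ∧ f c = i ∧ f c' = i + 1 ∧ c.2 < c'.2 then some f
  else if ∃ c c', IsCell μ c ∧ IsCell μ c' ∧ f c = i ∧ f c' = i + 1 ∧ c.2 = c'.2 then none
  else some (fun c => if f c = i then i + 1 else if f c = i + 1 then i else f c)

/-- Searles' operator `π_i`, extended linearly to the span of tableaux. -/
noncomputable def piOpG (μ : List ℕ) (i : ℕ) :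
    ((ℕ × ℕ → ℕ) →₀ ℂ) →ₗ[ℂ] ((ℕ × ℕ → ℕ) →₀ ℂ) :=
  Finsupp.lsum ℂ fun f => (searlesStepG μ i f).elim 0 fun f' => Finsupp.lsingle f'

/-! `π_i` only looks at the columns of the entries `i` and `i + 1`: it fixes the tableau, kills
it, or relabels it by the transposition `s_i`. Relabelling by a permutation `σ` permutes the
columns of the entries, `col (σ • T) = col T ∘ σ⁻¹`, so on tableaux in which each of `1, …, n`
occupies exactly one cell, `π_i` is the bubble-sort operator of the 0-Hecke monoid acting on the
column word of `T`. For that operator the relations come down to comparing the columns of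
`i, i + 1, i + 2` (resp. `i, i + 1, j, j + 1`), the braid relation of transpositions settling the one case in
which both sides relabel three times. Standardness survives `s_i` unless `i` is immediately left
of or above `i + 1`, and in neither case is `i` strictly right of `i + 1`. -/

open Equiv Finsupp Set

section PartialMaps

variable {α β γ R : Type*} [CommSemiring R]

noncomputable def lmapPartial (s : α → Option β) : (α →₀ R) →ₗ[R] (β →₀ R) :=
  Finsupp.lsum R fun x => (s x).elim 0 fun y => Finsupp.lsingle y

theorem lmapPartial_single (s : α → Option β) (x : α) (r : R) :
    lmapPartial s (single x r) = (s x).elim 0 fun y => single y r := by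
  rw [lmapPartial, lsum_single]
  cases s x <;> rfl

theorem lmapPartial_comp (s : α → Option β) (t : β → Option γ) :
    (lmapPartial t).comp (lmapPartial s) =
      (lmapPartial (fun x => (s x).bind t) : (α →₀ R) →ₗ[R] _) := by
  ext x
  simp only [LinearMap.comp_apply, lsingle_apply, lmapPartial_single]
  cases s x <;> simp [lmapPartial_single]

theorem lmapPartial_apply_eq_of_mem_supported {s t : α → Option β} {S : Set α}
    (h : ∀ x ∈ S, s x = t x) {v : α →₀ R} (hv : v ∈ supported R R S) :
    lmapPartial s v = lmapPartial t v := by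
  simp only [lmapPartial, lsum_apply]
  exact Finsupp.sum_congr fun x hx => by rw [h x (hv hx)]

theorem lmapPartial_mem_supported {s : α → Option β} {S : Set α} {T : Set β}
    (h : ∀ x ∈ S, ∀ y ∈ s x, y ∈ T) {v : α →₀ R} (hv : v ∈ supported R R S) :
    lmapPartial s v ∈ supported R R T := by
  simp only [lmapPartial, lsum_apply]
  refine Submodule.finsuppSum_mem _ _ _ _ fun x hx => ?_
  cases hsx : s x with
  | none => exact zero_mem _
  | some y => exact single_mem_supported R _ (h x (hv (mem_support_iff.mpr hx)) y hsx)

end PartialMaps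

theorem Set.EqOn.comp_of_mapsTo {α β γ : Type*} {f₁ f₂ : β → γ} {g₁ g₂ : α → β} {s : Set α}
    {t : Set β} (hf : EqOn f₁ f₂ t) (hg : EqOn g₁ g₂ s) (hg₂ : MapsTo g₂ s t) :
    EqOn (f₁ ∘ g₁) (f₂ ∘ g₂) s :=
  hg.comp_left.trans (hf.comp_right hg₂)

section BubbleSort

variable {α : Type*} [MulAction (Perm ℕ) α] (col : α → ℕ → ℕ)

/-- The 0-Hecke action on the word `col x`, with `none` standing for `0`. -/
def bubbleStep (i : ℕ) (x : α) : Option α :=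
  if col x i < col x (i + 1) then some x
  else if col x i = col x (i + 1) then none
  else some (swap i (i + 1) • x)

theorem swap_smul_swap_smul_comm {i j : ℕ} (hij : i + 2 ≤ j ∨ j + 2 ≤ i) (x : α) :
    swap i (i + 1) • swap j (j + 1) • x = swap j (j + 1) • swap i (i + 1) • x := by
  have : swap i (i + 1) * swap j (j + 1) = swap j (j + 1) * swap i (i + 1) := by
    ext k
    simp only [Perm.mul_apply, swap_apply_def]
    split_ifs <;> omega
  rw [smul_smul, this, ← smul_smul]

theorem swap_smul_braid (i : ℕ) (x : α) :
    swap i (i + 1) • swap (i + 1) (i + 2) • swap i (i + 1) • x =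
      swap (i + 1) (i + 2) • swap i (i + 1) • swap (i + 1) (i + 2) • x := by
  simp only [smul_smul, ← mul_assoc]
  rw [swap_mul_swap_mul_swap (by omega) (by omega), swap_comm i (i + 1),
    swap_comm (i + 1) (i + 2), swap_mul_swap_mul_swap (by omega) (by omega), swap_comm]

variable {col} (hcol : ∀ (σ : Perm ℕ) x k, col (σ • x) k = col x (σ⁻¹ k))
include hcol

theorem bubbleStep_bind_self (i : ℕ) (x : α) :
    (bubbleStep col i x).bind (bubbleStep col i) = bubbleStep col i x := by
  rcases lt_trichotomy (col x i) (col x (i + 1)) with h | h | h <;>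
    simp (disch := omega) only [bubbleStep, hcol, swap_inv, swap_apply_left, swap_apply_right,
      if_pos, if_neg, Option.bind_some, Option.bind_none]

theorem bubbleStep_bind_comm {i j : ℕ} (hij : i + 2 ≤ j ∨ j + 2 ≤ i) (x : α) :
    (bubbleStep col j x).bind (bubbleStep col i) =
      (bubbleStep col i x).bind (bubbleStep col j) := by
  have h₁ : swap i (i + 1) j = j := swap_apply_of_ne_of_ne (by omega) (by omega)
  have h₂ : swap i (i + 1) (j + 1) = j + 1 := swap_apply_of_ne_of_ne (by omega) (by omega)
  have h₃ : swap j (j + 1) i = i := swap_apply_of_ne_of_ne (by omega) (by omega)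
  have h₄ : swap j (j + 1) (i + 1) = i + 1 := swap_apply_of_ne_of_ne (by omega) (by omega)
  rcases lt_trichotomy (col x i) (col x (i + 1)) with hi | hi | hi <;>
  rcases lt_trichotomy (col x j) (col x (j + 1)) with hj | hj | hj <;>
  simp (disch := omega) only [bubbleStep, hcol, swap_inv, h₁, h₂, h₃, h₄, if_pos, if_neg,
    Option.bind_some, Option.bind_none, swap_smul_swap_smul_comm hij]

theorem bubbleStep_braid (i : ℕ) (x : α) :
    ((bubbleStep col i x).bind (bubbleStep col (i + 1))).bind (bubbleStep col i) =
      ((bubbleStep col (i + 1) x).bind (bubbleStep col i)).bind (bubbleStep col (i + 1)) := by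
  have h₁ : swap (i + 1) (i + 2) i = i := swap_apply_of_ne_of_ne (by omega) (by omega)
  have h₂ : swap i (i + 1) (i + 2) = i + 2 := swap_apply_of_ne_of_ne (by omega) (by omega)
  rcases lt_trichotomy (col x i) (col x (i + 1)) with hpq | hpq | hpq <;>
  rcases lt_trichotomy (col x (i + 1)) (col x (i + 2)) with hqr | hqr | hqr <;>
  rcases lt_trichotomy (col x i) (col x (i + 2)) with hpr | hpr | hpr <;>
  first
  | (exfalso; omega)
  | simp (disch := omega) only [bubbleStep, hcol, swap_inv, swap_apply_left, swap_apply_right,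
      h₁, h₂, Nat.add_assoc, Nat.reduceAdd, if_pos, if_neg, Option.bind_some, Option.bind_none,
      swap_smul_braid]

variable {R : Type*} [CommSemiring R]

theorem lmapPartial_bubbleStep_comp_self (i : ℕ) :
    (lmapPartial (bubbleStep col i)).comp (lmapPartial (bubbleStep col i)) =
      (lmapPartial (bubbleStep col i) : (α →₀ R) →ₗ[R] _) := by
  rw [lmapPartial_comp]
  exact congrArg lmapPartial (funext (bubbleStep_bind_self hcol i))

theorem lmapPartial_bubbleStep_comm {i j : ℕ} (hij : i + 2 ≤ j ∨ j + 2 ≤ i) :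
    (lmapPartial (bubbleStep col i)).comp (lmapPartial (bubbleStep col j)) =
      ((lmapPartial (bubbleStep col j)).comp (lmapPartial (bubbleStep col i)) :
        (α →₀ R) →ₗ[R] _) := by
  rw [lmapPartial_comp, lmapPartial_comp]
  exact congrArg lmapPartial (funext (bubbleStep_bind_comm hcol hij))

theorem lmapPartial_bubbleStep_braid (i : ℕ) :
    (lmapPartial (bubbleStep col i)).comp
        ((lmapPartial (bubbleStep col (i + 1))).comp (lmapPartial (bubbleStep col i))) =
      ((lmapPartial (bubbleStep col (i + 1))).comp
        ((lmapPartial (bubbleStep col i)).comp (lmapPartial (bubbleStep col (i + 1)))) :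
        (α →₀ R) →ₗ[R] _) := by
  simp only [lmapPartial_comp]
  exact congrArg lmapPartial (funext (bubbleStep_braid hcol i))

end BubbleSort

section Tableaux

variable {μ : List ℕ} {n i k : ℕ} {f : ℕ × ℕ → ℕ}

/-- The column of some cell of `f` carrying `k`: an arbitrary junk value unless that cell is
unique. -/
noncomputable def colOf (μ : List ℕ) (f : ℕ × ℕ → ℕ) (k : ℕ) : ℕ :=
  (Classical.epsilon fun c => IsCell μ c ∧ f c = k).2

theorem colOf_perm_smul (μ : List ℕ) (σ : Perm ℕ) (f : ℕ × ℕ → ℕ) (k : ℕ) :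
    colOf μ (σ • f) k = colOf μ f (σ⁻¹ k) := by
  simp only [colOf, Pi.smul_apply, Perm.smul_def, ← Perm.eq_inv_iff_eq]

theorem colOf_eq_of_existsUnique (h : ∃! c, IsCell μ c ∧ f c = k) {c : ℕ × ℕ}
    (hc : IsCell μ c) (hfc : f c = k) : colOf μ f k = c.2 := by
  rw [colOf, h.unique (Classical.epsilon_spec h.exists) ⟨hc, hfc⟩]

def HasUniqueEntries (μ : List ℕ) (n : ℕ) (f : ℕ × ℕ → ℕ) : Prop :=
  ∀ k, 1 ≤ k → k ≤ n → ∃! c, IsCell μ c ∧ f c = k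

theorem HasUniqueEntries.swap_smul (h : HasUniqueEntries μ n f) (hi : 1 ≤ i)
    (hin : i + 1 ≤ n) : HasUniqueEntries μ n (swap i (i + 1) • f) := by
  intro k hk hkn
  have hk' : 1 ≤ swap i (i + 1) k ∧ swap i (i + 1) k ≤ n := by
    rw [swap_apply_def]
    split_ifs <;> omega
  simpa only [Pi.smul_apply, Perm.smul_def, swap_apply_eq_iff] using h _ hk'.1 hk'.2

theorem searlesStepG_eq_bubbleStep (h : HasUniqueEntries μ n f) (hi : 1 ≤ i)
    (hin : i + 1 ≤ n) : searlesStepG μ i f = bubbleStep (colOf μ) i f := by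
  obtain ⟨a, ⟨ha, hfa⟩, ha'⟩ := h i hi (by omega)
  obtain ⟨b, ⟨hb, hfb⟩, hb'⟩ := h (i + 1) (by omega) hin
  have hcells : ∀ r : ℕ → ℕ → Prop,
      (∃ c c', IsCell μ c ∧ IsCell μ c' ∧ f c = i ∧ f c' = i + 1 ∧ r c.2 c'.2) ↔
        r (colOf μ f i) (colOf μ f (i + 1)) := by
    intro r
    rw [colOf_eq_of_existsUnique (h i hi (by omega)) ha hfa,
      colOf_eq_of_existsUnique (h (i + 1) (by omega) hin) hb hfb]
    constructor
    · rintro ⟨c, c', hc, hc', hfc, hfc', hr⟩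
      rwa [ha' c ⟨hc, hfc⟩, hb' c' ⟨hc', hfc'⟩] at hr
    · exact fun hr => ⟨a, b, ha, hb, hfa, hfb, hr⟩
  have hswap : (fun c => if f c = i then i + 1 else if f c = i + 1 then i else f c) =
      swap i (i + 1) • f := by
    funext c
    simp only [Pi.smul_apply, Perm.smul_def, swap_apply_def]
  simp only [searlesStepG, bubbleStep, hcells (· < ·), hcells (· = ·), hswap]

theorem getD_succ_le_getD (hμ : μ.IsChain (· ≥ ·)) (r : ℕ) :
    μ.getD (r + 1) 0 ≤ μ.getD r 0 := by
  by_cases hr : r + 1 < μ.length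
  · rw [List.getD_eq_getElem μ 0 hr, List.getD_eq_getElem μ 0 (by omega)]
    exact List.isChain_iff_getElem.mp hμ r hr
  · rw [List.getD_eq_default μ 0 (by omega)]
    exact Nat.zero_le _

theorem IsCell.of_succ_col {r j : ℕ} (h : IsCell μ (r, j + 1)) : IsCell μ (r, j) :=
  Nat.lt_of_succ_lt h

theorem IsCell.of_succ_row (hμ : μ.IsChain (· ≥ ·)) {r j : ℕ} (h : IsCell μ (r + 1, j)) :
    IsCell μ (r, j) :=
  lt_of_lt_of_le h (getD_succ_le_getD hμ r)

theorem IsSYTgen.swap_smul (hμ : μ.IsChain (· ≥ ·)) (hf : IsSYTgen n μ f) (hi : 1 ≤ i)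
    (hin : i + 1 ≤ n) (hcol : colOf μ f (i + 1) < colOf μ f i) :
    IsSYTgen n μ (swap i (i + 1) • f) := by
  obtain ⟨hout, hrange, huniq, hrow, hcolumn⟩ := hf
  have hlt : ∀ {c c'}, IsCell μ c → IsCell μ c' → c.2 ≤ c'.2 → f c < f c' →
      (swap i (i + 1) • f) c < (swap i (i + 1) • f) c' := by
    intro c c' hc hc' hle hfcc'
    have : ¬ (f c = i ∧ f c' = i + 1) := by
      rintro ⟨hfc, hfc'⟩
      rw [colOf_eq_of_existsUnique (huniq _ hi (by omega)) hc hfc,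
        colOf_eq_of_existsUnique (huniq _ (by omega) hin) hc' hfc'] at hcol
      omega
    simp only [Pi.smul_apply, Perm.smul_def, swap_apply_def]
    split_ifs <;> omega
  refine ⟨fun c hc => ?_, fun c hc => ?_, HasUniqueEntries.swap_smul huniq hi hin,
    fun r j hc => hlt hc.of_succ_col hc (Nat.le_succ j) (hrow r j hc),
    fun r j hc => hlt (hc.of_succ_row hμ) hc le_rfl (hcolumn r j hc)⟩
  · have := hout c hc
    simp only [Pi.smul_apply, Perm.smul_def, swap_apply_def]
    split_ifs <;> omega
  · have := hrange c hc
    simp only [Pi.smul_apply, Perm.smul_def, swap_apply_def]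
    split_ifs <;> omega

theorem searlesStepG_isSYTgen (hμ : μ.IsChain (· ≥ ·)) (hf : IsSYTgen n μ f) (hi : 1 ≤ i)
    (hin : i + 1 ≤ n) : ∀ g ∈ searlesStepG μ i f, IsSYTgen n μ g := by
  rw [searlesStepG_eq_bubbleStep hf.2.2.1 hi hin, bubbleStep]
  split_ifs
  · rintro g ⟨⟩
    exact hf
  · nofun
  · rintro g ⟨⟩
    exact hf.swap_smul hμ hi hin (by omega)

theorem bubbleStep_colOf_hasUniqueEntries (hf : HasUniqueEntries μ n f) (hi : 1 ≤ i)
    (hin : i + 1 ≤ n) : ∀ g ∈ bubbleStep (colOf μ) i f, HasUniqueEntries μ n g := by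
  rw [bubbleStep]
  split_ifs
  · rintro g ⟨⟩
    exact hf
  · nofun
  · rintro g ⟨⟩
    exact hf.swap_smul hi hin

theorem piOpG_eq_lmapPartial (μ : List ℕ) (i : ℕ) :
    piOpG μ i = lmapPartial (searlesStepG μ i) :=
  rfl

def uniqueEntriesSpan (μ : List ℕ) (n : ℕ) : Submodule ℂ ((ℕ × ℕ → ℕ) →₀ ℂ) :=
  supported ℂ ℂ {f | HasUniqueEntries μ n f}

theorem eqOn_piOpG_lmapPartial_bubbleStep (hi : 1 ≤ i) (hin : i + 1 ≤ n) :
    EqOn (piOpG μ i) (lmapPartial (bubbleStep (colOf μ) i)) (uniqueEntriesSpan μ n) :=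
  fun _ hv =>
    lmapPartial_apply_eq_of_mem_supported (fun _ hf => searlesStepG_eq_bubbleStep hf hi hin) hv

theorem mapsTo_lmapPartial_bubbleStep (hi : 1 ≤ i) (hin : i + 1 ≤ n) :
    MapsTo (lmapPartial (R := ℂ) (bubbleStep (colOf μ) i)) (uniqueEntriesSpan μ n)
      (uniqueEntriesSpan μ n) :=
  fun _ hv =>
    lmapPartial_mem_supported (fun _ hf => bubbleStep_colOf_hasUniqueEntries hf hi hin) hv

end Tableaux

/-- Searles' operators on the span of standard Young tableaux of a fixed shape `μ ⊢ n`
preserve that span and satisfy the 0-Hecke relations `π_i² = π_i`,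
`π_i π_{i+1} π_i = π_{i+1} π_i π_{i+1}`, and `π_i π_j = π_j π_i` for `|i-j| ≥ 2`,
making `X_μ` an `H_n(0)`-module. -/
theorem stmt_14 (n : ℕ) (μ : List ℕ)
    (hμ : μ.Chain' (· ≥ ·) ∧ (∀ x ∈ μ, 0 < x) ∧ μ.sum = n) :
    let W : Submodule ℂ ((ℕ × ℕ → ℕ) →₀ ℂ) :=
      Finsupp.supported ℂ ℂ {f | IsSYTgen n μ f}
    (∀ i, 1 ≤ i → i ≤ n - 1 → ∀ v ∈ W, piOpG μ i v ∈ W) ∧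
    (∀ i, 1 ≤ i → i ≤ n - 1 → ∀ v ∈ W, piOpG μ i (piOpG μ i v) = piOpG μ i v) ∧
    (∀ i, 1 ≤ i → i + 1 ≤ n - 1 → ∀ v ∈ W,
      piOpG μ i (piOpG μ (i + 1) (piOpG μ i v)) =
        piOpG μ (i + 1) (piOpG μ i (piOpG μ (i + 1) v))) ∧
    (∀ i j, 1 ≤ i → i ≤ n - 1 → 1 ≤ j → j ≤ n - 1 → (i + 2 ≤ j ∨ j + 2 ≤ i) →
      ∀ v ∈ W, piOpG μ i (piOpG μ j v) = piOpG μ j (piOpG μ i v)) := by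
  obtain ⟨hchain, -, -⟩ := hμ
  intro W
  let B (j : ℕ) := lmapPartial (R := ℂ) (bubbleStep (colOf μ) j)
  have hcol := colOf_perm_smul μ
  have hW : ∀ v ∈ W, v ∈ uniqueEntriesSpan μ n :=
    fun _ hv => supported_mono (fun _ hf => hf.2.2.1) hv
  have hπ : ∀ j, 1 ≤ j → j ≤ n - 1 → EqOn (piOpG μ j) (B j) (uniqueEntriesSpan μ n) :=
    fun j hj hjn => eqOn_piOpG_lmapPartial_bubbleStep hj (by omega)
  have hB : ∀ j, 1 ≤ j → j ≤ n - 1 →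
      MapsTo (B j) (uniqueEntriesSpan μ n) (uniqueEntriesSpan μ n) :=
    fun j hj hjn => mapsTo_lmapPartial_bubbleStep hj (by omega)
  refine ⟨fun i hi hin v hv => ?_, fun i hi hin v hv => ?_, fun i hi hin v hv => ?_,
    fun i j hi hin hj hjn hij v hv => ?_⟩
  · rw [piOpG_eq_lmapPartial]
    exact lmapPartial_mem_supported (fun _ hf => searlesStepG_isSYTgen hchain hf hi (by omega)) hv
  · calc piOpG μ i (piOpG μ i v) = B i (B i v) :=
          (hπ i hi hin).comp_of_mapsTo (hπ i hi hin) (hB i hi hin) (hW v hv)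
      _ = B i v := LinearMap.congr_fun (lmapPartial_bubbleStep_comp_self hcol i) v
      _ = piOpG μ i v := (hπ i hi hin (hW v hv)).symm
  · have h₁ := hπ i hi (by omega)
    have h₂ := hπ (i + 1) (by omega) hin
    have m₁ := hB i hi (by omega)
    have m₂ := hB (i + 1) (by omega) hin
    calc _ = B i (B (i + 1) (B i v)) :=
          h₁.comp_of_mapsTo (h₂.comp_of_mapsTo h₁ m₁) (m₂.comp m₁) (hW v hv)
      _ = B (i + 1) (B i (B (i + 1) v)) :=
          LinearMap.congr_fun (lmapPartial_bubbleStep_braid hcol i) v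
      _ = _ := (h₂.comp_of_mapsTo (h₁.comp_of_mapsTo h₂ m₂) (m₁.comp m₂) (hW v hv)).symm
  · calc _ = B i (B j v) := (hπ i hi hin).comp_of_mapsTo (hπ j hj hjn) (hB j hj hjn) (hW v hv)
      _ = B j (B i v) := LinearMap.congr_fun (lmapPartial_bubbleStep_comm hcol hij) v
      _ = _ := ((hπ j hj hjn).comp_of_mapsTo (hπ i hi hin) (hB i hi hin) (hW v hv)).symm
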